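/- As ℤ_p-linear endomorphisms of B one has the commutation relation (Id + β·q·𝒟) ∘ ∇ ∘ ∂ = s₀·(∂ ∘ ∇) − 𝒟 ∘ ∇ + s₀·s₁·∇, where s₀ ∈ A acts by multiplication (and similarly s₀·s₁). Here s₀ := [k]_{q^{p^α}}·([k]_u)^{−1} is a unit of A, and s₁ ∈ A is the unique element with q·β·[k]_{q^{p^α}}·s₁ = [k]_{q^{p^α}} − [k]_u (equivalently, s₁ = −∂(d)/d). -/

import Mathlib

/-!
Comparing coefficients of `T ^ r` after multiplying by `q β [k]_u`, everything becomes scalar: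
`∇ (T ^ m) = e(m) T ^ (m - 1)` with `e(m) = d [m]_u`, `∂` acts on coefficients, and
`[k]_u 𝒟 (∇ (T ^ m)) = S(m) T ^ (m - 1)` with `S(m) = ∑_{j ≥ 2} c_j ∏_{i<j} e(m - i)`.
The relation then reduces to `[k]_u e(m) + β q S(m) = [k]_{q^{p^α}} γ₀(e(m))`.
Multiplied by `β`, the right side is `γ₀(β e(m)) = γ₀(u^m - 1) = u^{km} - 1`, since
`γ₀(β) = β [k]_{q^{p^α}}`. On the left, `β e(n) = u^n - 1` and
`u^{j(j-1)/2} ∏_{i<j} (u^{m-i} - 1) = ∏_{i<j} (u^m - u^i)` turn it into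
`∑_j a_{k,j} ∏_{i<j} (x - u^i)` at `x = u^m`, and the recursion defining `a_{k,j}` is exactly
the statement that this Newton-type expansion equals `x^k`.
-/

open Finset

/-- The q-analogue `[n]_t = ∑_{i=0}^{n-1} t^i`. -/
def qan {A : Type*} [CommRing A] (t : A) (n : ℕ) : A := ∑ i ∈ Finset.range n, t ^ i

variable (p : ℕ) [Fact p.Prime] (α : ℕ)

/-- `A := ℤ_p⟦q−1⟧`; `q` is `1` plus the power series variable. -/
noncomputable def qA : PowerSeries ℤ_[p] := 1 + PowerSeries.X

/-- `β := q^{p^α} − 1 ∈ A`. -/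
noncomputable def βA : PowerSeries ℤ_[p] := (qA p) ^ p ^ α - 1

/-- `d := [p]_{q^{p^α}} ∈ A`. -/
noncomputable def dA : PowerSeries ℤ_[p] := qan ((qA p) ^ p ^ α) p

/-- `u := q^{p^{α+1}} ∈ A`. -/
noncomputable def uA : PowerSeries ℤ_[p] := (qA p) ^ p ^ (α + 1)

/-- The substitution `q ↦ q^{p^{α+1}+1}` on `A = ℤ_p⟦q−1⟧` (a `ℤ_p`-linear ring
endomorphism); the coefficient of `X^m` is given by the finite coefficientwise
substitution formula `X ↦ (1+X)^{p^{α+1}+1} − 1`, valid since the substituted series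
has zero constant term. -/
noncomputable def substQ (f : PowerSeries ℤ_[p]) : PowerSeries ℤ_[p] :=
  PowerSeries.mk fun m =>
    ∑ n ∈ Finset.range (m + 1),
      PowerSeries.coeff n f *
        PowerSeries.coeff m (((qA p) ^ (p ^ (α + 1) + 1) - 1) ^ n)

/-- `γ₀ : B → B`, fixing `T` and acting on coefficients by `q ↦ q^{p^{α+1}+1}`. -/
noncomputable def gamma0 (f : Polynomial (PowerSeries ℤ_[p])) :
    Polynomial (PowerSeries ℤ_[p]) :=
  ∑ n ∈ f.support, Polynomial.C (substQ p α (f.coeff n)) * Polynomial.X ^ n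

/-- `∇ : B → B`, the `A`-linear map with `∇(T^m) = d·[m]_u·T^{m−1}`
(so `β·T·∇ = γ₁ − Id` for `γ₁` the `A`-algebra map `T ↦ u·T`). -/
noncomputable def nablaA (f : Polynomial (PowerSeries ℤ_[p])) :
    Polynomial (PowerSeries ℤ_[p]) :=
  ∑ n ∈ f.support,
    Polynomial.C (f.coeff n * dA p α * qan (uA p α) n) * Polynomial.X ^ (n - 1)

/-- The coefficients `a_{k',j} ∈ A`: `a_{k',0} = 1`, `a_{1,1} = 1`, `a_{k',j} = 0` for
`j > k'`, and `a_{k'+1,j} = a_{k',j}·(1 + (u−1)·[j]_u) + a_{k',j−1}`. -/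
noncomputable def aaA : ℕ → ℕ → PowerSeries ℤ_[p]
  | 0, 0 => 1
  | 0, _ + 1 => 0
  | _ + 1, 0 => 1
  | k' + 1, j + 1 =>
      aaA k' (j + 1) * (1 + (uA p α - 1) * qan (uA p α) (j + 1)) + aaA k' j

lemma sum_range_succ_eq_add_add_sum_Icc {M : Type*} [AddCommMonoid M] (f : ℕ → M) {n : ℕ}
    (hn : 1 ≤ n) : ∑ j ∈ range (n + 1), f j = f 0 + f 1 + ∑ j ∈ Icc 2 n, f j := by
  rw [range_eq_Ico, sum_eq_sum_Ico_succ_bot (by omega), sum_eq_sum_Ico_succ_bot (by omega),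
    ← add_assoc, Ico_add_one_right_eq_Icc]

section QAnalogue

variable {R : Type*} [CommRing R]

lemma sub_one_mul_qan (t : R) (n : ℕ) : (t - 1) * qan t n = t ^ n - 1 :=
  mul_geom_sum t n

lemma pow_mul_prod_pow_sub_one (u : R) (m j : ℕ) :
    u ^ (j * (j - 1) / 2) * ∏ i ∈ range j, (u ^ (m - i) - 1) =
      ∏ i ∈ range j, (u ^ m - u ^ i) := by
  rcases lt_or_ge m j with hmj | hjm
  · have hm : m ∈ range j := mem_range.2 hmj
    rw [prod_eq_zero hm (by simp), prod_eq_zero hm (by simp), mul_zero]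
  · rw [← sum_range_id, ← prod_pow_eq_pow_sum, ← prod_mul_distrib]
    refine prod_congr rfl fun i hi => ?_
    rw [mul_sub, mul_one, ← pow_add, Nat.add_sub_cancel' (by simp at hi; omega)]

end QAnalogue

section PowerSeries

open PowerSeries

variable {R : Type*} [CommRing R]

lemma constantCoeff_qan {t : PowerSeries R} (ht : constantCoeff t = 1) (n : ℕ) :
    constantCoeff (qan t n) = n := by
  simp [qan, ht]

lemma qan_ne_zero [CharZero R] {t : PowerSeries R} (ht : constantCoeff t = 1) {n : ℕ}
    (hn : n ≠ 0) : qan t n ≠ 0 := fun h => by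
  have h0 := constantCoeff_qan ht n
  rw [h, map_zero] at h0
  exact hn (by exact_mod_cast h0.symm)

end PowerSeries

lemma aaA_zero_right (K : ℕ) : aaA p α K 0 = 1 := by
  cases K <;> rfl

lemma aaA_succ_succ (K j : ℕ) :
    aaA p α (K + 1) (j + 1) = aaA p α K (j + 1) * uA p α ^ (j + 1) + aaA p α K j := by
  rw [aaA, sub_one_mul_qan]
  ring

lemma aaA_eq_zero_of_lt {K j : ℕ} (h : K < j) : aaA p α K j = 0 := by
  induction K generalizing j with
  | zero => obtain ⟨j, rfl⟩ := Nat.exists_eq_add_of_lt h; rfl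
  | succ K ih =>
    obtain ⟨j, rfl⟩ := Nat.exists_eq_add_of_lt (Nat.zero_lt_of_lt h)
    rw [aaA_succ_succ, ih (by omega), ih (by omega), zero_mul, zero_add]

lemma aaA_one_right (K : ℕ) : aaA p α K 1 = qan (uA p α) K := by
  induction K with
  | zero => rfl
  | succ K ih => rw [aaA_succ_succ, ih, aaA_zero_right, qan, qan, geom_sum_succ]; ring

lemma sum_aaA_mul_prod_sub_pow (K : ℕ) (x : PowerSeries ℤ_[p]) :
    ∑ j ∈ range (K + 1), aaA p α K j * ∏ i ∈ range j, (x - uA p α ^ i) = x ^ K := by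
  induction K with
  | zero => simp [aaA_zero_right]
  | succ K ih =>
    set N : ℕ → PowerSeries ℤ_[p] := fun j => ∏ i ∈ range j, (x - uA p α ^ i)
    have hshift : ∑ j ∈ range (K + 1), aaA p α K (j + 1) * uA p α ^ (j + 1) * N (j + 1) + 1 =
        ∑ j ∈ range (K + 1), aaA p α K j * uA p α ^ j * N j := by
      rw [sum_range_succ, aaA_eq_zero_of_lt p α (Nat.lt_succ_self K), zero_mul, zero_mul,
        add_zero, sum_range_succ' (fun j => aaA p α K j * uA p α ^ j * N j)]
      simp [aaA_zero_right, N]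
    calc ∑ j ∈ range (K + 1 + 1), aaA p α (K + 1) j * N j
        = ∑ j ∈ range (K + 1), aaA p α K (j + 1) * uA p α ^ (j + 1) * N (j + 1) + 1 +
            ∑ j ∈ range (K + 1), aaA p α K j * N (j + 1) := by
          simp only [sum_range_succ' _ (K + 1), aaA_succ_succ, add_mul, sum_add_distrib,
            aaA_zero_right, N, range_zero, prod_empty]
          ring
      _ = ∑ j ∈ range (K + 1), aaA p α K j * N j * x := by
          rw [hshift, ← sum_add_distrib]
          refine sum_congr rfl fun j _ => ?_
          simp only [N, prod_range_succ]
          ring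
      _ = x ^ (K + 1) := by rw [← sum_mul, ih, pow_succ]

lemma constantCoeff_qA : PowerSeries.constantCoeff (qA p) = 1 := by
  simp [qA]

lemma qA_ne_zero : qA p ≠ 0 := fun h => by
  simpa [h] using constantCoeff_qA p

lemma βA_ne_zero : βA p α ≠ 0 := by
  have hβ : βA p α = PowerSeries.X * qan (qA p) (p ^ α) := by
    rw [βA, ← sub_one_mul_qan, qA, add_sub_cancel_left]
  rw [hβ]
  exact mul_ne_zero PowerSeries.X_ne_zero
    (qan_ne_zero (constantCoeff_qA p) (pow_ne_zero _ (Fact.out : p.Prime).ne_zero))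

lemma constantCoeff_qA_pow_sub_one (n : ℕ) : PowerSeries.constantCoeff (qA p ^ n - 1) = 0 := by
  simp [constantCoeff_qA]

lemma hasSubst_substQ : PowerSeries.HasSubst (qA p ^ (p ^ (α + 1) + 1) - 1) :=
  PowerSeries.HasSubst.of_constantCoeff_zero' (constantCoeff_qA_pow_sub_one p _)

lemma substQ_eq_subst (f : PowerSeries ℤ_[p]) :
    substQ p α f = f.subst ((qA p) ^ (p ^ (α + 1) + 1) - 1) := by
  ext m
  rw [PowerSeries.coeff_subst' (hasSubst_substQ p α), substQ, PowerSeries.coeff_mk,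
    finsum_eq_sum_of_support_subset _ (s := range (m + 1))]
  · simp only [smul_eq_mul]
  intro n hn
  rw [Function.mem_support] at hn
  rw [coe_range, Set.mem_Iio, Nat.lt_succ_iff]
  by_contra! hmn
  have hX : PowerSeries.X ^ n ∣ (qA p ^ (p ^ (α + 1) + 1) - 1) ^ n :=
    pow_dvd_pow_of_dvd (PowerSeries.X_dvd_iff.2 (constantCoeff_qA_pow_sub_one p _)) n
  exact hn (by rw [PowerSeries.X_pow_dvd_iff.1 hX m hmn, smul_zero])

noncomputable def substQHom : PowerSeries ℤ_[p] →+* PowerSeries ℤ_[p] :=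
  (PowerSeries.substAlgHom (hasSubst_substQ p α)).toRingHom

lemma coe_substQHom : ⇑(substQHom p α) = substQ p α := by
  ext1 f
  rw [substQ_eq_subst, substQHom, AlgHom.toRingHom_eq_coe, RingHom.coe_coe,
    PowerSeries.coe_substAlgHom]

lemma substQ_qA : substQ p α (qA p) = qA p ^ (p ^ (α + 1) + 1) := by
  calc substQ p α (qA p) = substQHom p α (1 + PowerSeries.X) := by rw [coe_substQHom, qA]
    _ = 1 + (qA p ^ (p ^ (α + 1) + 1) - 1) := by
      rw [map_add, map_one, coe_substQHom, substQ_eq_subst,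
        PowerSeries.subst_X (hasSubst_substQ p α)]
    _ = _ := add_sub_cancel _ _

section Operators

open Polynomial

lemma coeff_gamma0 (f : (PowerSeries ℤ_[p])[X]) (n : ℕ) :
    (gamma0 p α f).coeff n = substQ p α (f.coeff n) := by
  simp only [gamma0, finsetSum_coeff, coeff_C_mul_X_pow, sum_ite_eq]
  split_ifs with h
  · rfl
  · rw [notMem_support_iff.1 h, ← coe_substQHom, map_zero]

noncomputable def nablaFactor (n : ℕ) : PowerSeries ℤ_[p] := dA p α * qan (uA p α) n

lemma coeff_nablaA (g : (PowerSeries ℤ_[p])[X]) (r : ℕ) :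
    (nablaA p α g).coeff r = g.coeff (r + 1) * nablaFactor p α (r + 1) := by
  simp only [nablaA, finsetSum_coeff, coeff_C_mul_X_pow]
  rw [sum_eq_single (r + 1)]
  · simp [nablaFactor, mul_assoc]
  · intro n _ hn
    split_ifs with h
    · obtain rfl : n = 0 := by omega
      simp [qan]
    · rfl
  · intro h
    simp [notMem_support_iff.1 h]

lemma coeff_iterate_nablaA (j : ℕ) (g : (PowerSeries ℤ_[p])[X]) (r : ℕ) :
    ((nablaA p α)^[j] g).coeff r =
      g.coeff (r + j) * ∏ i ∈ range j, nablaFactor p α (r + j - i) := by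
  induction j generalizing g with
  | zero => simp
  | succ j ih =>
    rw [Function.iterate_succ_apply, ih, coeff_nablaA, prod_range_succ', Nat.sub_zero,
      ← add_assoc]
    simp only [Nat.add_sub_add_right]
    ring

lemma coeff_X_pow_mul_iterate_nablaA (j : ℕ) (g : (PowerSeries ℤ_[p])[X]) (r : ℕ) :
    (X ^ j * (nablaA p α)^[j + 1] g).coeff r =
      g.coeff (r + 1) * ∏ i ∈ range (j + 1), nablaFactor p α (r + 1 - i) := by
  rw [coeff_X_pow_mul', coeff_iterate_nablaA]
  split_ifs with h
  · rw [show r - j + (j + 1) = r + 1 by omega]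
  · rw [prod_eq_zero (i := r + 1) (by simp; omega) (by simp [nablaFactor, qan]), mul_zero]

end Operators

lemma βA_mul_nablaFactor (n : ℕ) : βA p α * nablaFactor p α n = uA p α ^ n - 1 := by
  rw [nablaFactor, ← mul_assoc, βA, dA, sub_one_mul_qan, ← pow_mul, ← pow_succ, ← uA,
    sub_one_mul_qan]

lemma substQ_βA : substQ p α (βA p α) = βA p α * qan (qA p ^ p ^ α) (p ^ (α + 1) + 1) := by
  rw [βA, ← coe_substQHom, map_sub, map_pow, map_one, coe_substQHom, substQ_qA, ← pow_mul,
    mul_comm, pow_mul, sub_one_mul_qan]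

lemma substQ_uA : substQ p α (uA p α) = uA p α ^ (p ^ (α + 1) + 1) := by
  rw [uA, ← coe_substQHom, map_pow, coe_substQHom, substQ_qA, ← pow_mul, ← pow_mul, mul_comm]

/-- `[k]_u · 𝒟 (∇ (T ^ m)) = symbolD m · T ^ (m - 1)`. -/
noncomputable def symbolD (m : ℕ) : PowerSeries ℤ_[p] :=
  ∑ j ∈ Icc 2 (p ^ (α + 1) + 1),
    aaA p α (p ^ (α + 1) + 1) j * qA p ^ (j * (j - 1) / 2 * p ^ (α + 1) - 1) *
      βA p α ^ (j - 2) * ∏ i ∈ range j, nablaFactor p α (m - i)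

lemma βA_mul_βA_mul_qA_mul_symbolD_summand {j : ℕ} (hj : 2 ≤ j) (K m : ℕ) :
    βA p α * (βA p α * qA p * (aaA p α K j * qA p ^ (j * (j - 1) / 2 * p ^ (α + 1) - 1) *
      βA p α ^ (j - 2) * ∏ i ∈ range j, nablaFactor p α (m - i))) =
      aaA p α K j * ∏ i ∈ range j, (uA p α ^ m - uA p α ^ i) := by
  have hexp : 1 ≤ j * (j - 1) / 2 * p ^ (α + 1) := by
    have h2 : 2 * 1 ≤ j * (j - 1) := Nat.mul_le_mul hj (by omega)
    have hp : 1 ≤ p ^ (α + 1) := Nat.one_le_pow _ _ (Fact.out : p.Prime).pos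
    exact Nat.one_le_iff_ne_zero.2 (mul_ne_zero (by omega) (by omega))
  have hq : qA p * qA p ^ (j * (j - 1) / 2 * p ^ (α + 1) - 1) = uA p α ^ (j * (j - 1) / 2) := by
    rw [← pow_succ', Nat.sub_add_cancel hexp, uA, ← pow_mul, mul_comm]
  have hβ : βA p α * βA p α * βA p α ^ (j - 2) = βA p α ^ j := by
    rw [← sq, ← pow_add, Nat.add_sub_cancel' hj]
  have hprod : βA p α ^ j * ∏ i ∈ range j, nablaFactor p α (m - i) =
      ∏ i ∈ range j, (uA p α ^ (m - i) - 1) := by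
    rw [show βA p α ^ j = ∏ _i ∈ range j, βA p α by simp, ← prod_mul_distrib]
    exact prod_congr rfl fun i _ => βA_mul_nablaFactor p α (m - i)
  calc _ = aaA p α K j * (qA p * qA p ^ (j * (j - 1) / 2 * p ^ (α + 1) - 1)) *
        (βA p α * βA p α * βA p α ^ (j - 2) *
          ∏ i ∈ range j, nablaFactor p α (m - i)) := by ring
    _ = _ := by rw [hq, hβ, hprod, mul_assoc, pow_mul_prod_pow_sub_one]

lemma qan_mul_nablaFactor_add_symbolD (m : ℕ) :
    qan (uA p α) (p ^ (α + 1) + 1) * nablaFactor p α m + βA p α * qA p * symbolD p α m =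
      qan (qA p ^ p ^ α) (p ^ (α + 1) + 1) * substQ p α (nablaFactor p α m) := by
  apply mul_left_cancel₀ (βA_ne_zero p α)
  calc βA p α *
        (qan (uA p α) (p ^ (α + 1) + 1) * nablaFactor p α m + βA p α * qA p * symbolD p α m)
      = aaA p α (p ^ (α + 1) + 1) 1 * ∏ i ∈ range 1, (uA p α ^ m - uA p α ^ i) +
          ∑ j ∈ Icc 2 (p ^ (α + 1) + 1),
            aaA p α (p ^ (α + 1) + 1) j * ∏ i ∈ range j, (uA p α ^ m - uA p α ^ i) := by
        rw [symbolD, mul_add, mul_sum, mul_sum, sum_congr rfl fun j hj =>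
          βA_mul_βA_mul_qA_mul_symbolD_summand p α (mem_Icc.1 hj).1 _ m, aaA_one_right,
          prod_range_one, pow_zero, ← βA_mul_nablaFactor]
        ring
    _ = (uA p α ^ m) ^ (p ^ (α + 1) + 1) - 1 := by
        rw [← sum_aaA_mul_prod_sub_pow p α _ (uA p α ^ m),
          sum_range_succ_eq_add_add_sum_Icc _ (by omega), aaA_zero_right, prod_range_zero]
        ring
    _ = _ := by
        rw [← mul_assoc, ← substQ_βA, ← coe_substQHom, ← map_mul, βA_mul_nablaFactor,
          map_sub, map_pow, map_one, coe_substQHom, substQ_uA, ← pow_mul, ← pow_mul, mul_comm]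

open Polynomial in
lemma qan_mul_coeff_apply_nablaA {𝒟 : (PowerSeries ℤ_[p])[X] → (PowerSeries ℤ_[p])[X]}
    (h𝒟 : ∀ f, C (qan (uA p α) (p ^ (α + 1) + 1)) * 𝒟 f =
      ∑ j ∈ Icc 2 (p ^ (α + 1) + 1),
        C (aaA p α (p ^ (α + 1) + 1) j *
            (qA p) ^ (j * (j - 1) / 2 * p ^ (α + 1) - 1) * (βA p α) ^ (j - 2)) *
          X ^ (j - 1) * (nablaA p α)^[j - 1] f)
    (g : (PowerSeries ℤ_[p])[X]) (r : ℕ) :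
    qan (uA p α) (p ^ (α + 1) + 1) * (𝒟 (nablaA p α g)).coeff r =
      g.coeff (r + 1) * symbolD p α (r + 1) := by
  have h := congrArg (coeff · r) (h𝒟 (nablaA p α g))
  simp only [coeff_C_mul, finsetSum_coeff, mul_assoc] at h
  rw [h, symbolD, mul_sum]
  refine sum_congr rfl fun j hj => ?_
  obtain ⟨i, rfl⟩ : ∃ i, j = i + 1 := ⟨j - 1, by simp at hj; omega⟩
  rw [Nat.add_sub_cancel, ← Function.iterate_succ_apply, coeff_X_pow_mul_iterate_nablaA]
  ring

/-- With `k := p^{α+1}+1`, `∂` the unique `ℤ_p`-linear map on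
`B = A[T]` with `q·β·∂ = γ₀ − Id`, `s₀ := [k]_{q^{p^α}}·([k]_u)^{−1}` (a unit of `A`),
`s₁` the unique element with `q·β·[k]_{q^{p^α}}·s₁ = [k]_{q^{p^α}} − [k]_u`, and
`𝒟 := ([k]_u)^{−1}·∑_{j=2}^{k} a_{k,j}·q^{j(j−1)p^{α+1}/2 − 1}·β^{j−2}·T^{j−1}·∇^{j−1}`,
one has the commutation relation
`(Id + β·q·𝒟) ∘ ∇ ∘ ∂ = s₀·(∂ ∘ ∇) − 𝒟 ∘ ∇ + s₀·s₁·∇` of `ℤ_p`-linear endomorphisms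
of `B`. -/
theorem stmt19
    (par : Polynomial (PowerSeries ℤ_[p]) → Polynomial (PowerSeries ℤ_[p]))
    (hpar : ∀ f, Polynomial.C (qA p * βA p α) * par f = gamma0 p α f - f)
    (s₀ s₁ : PowerSeries ℤ_[p])
    (hs₀ : s₀ * qan (uA p α) (p ^ (α + 1) + 1) = qan ((qA p) ^ p ^ α) (p ^ (α + 1) + 1))
    (hs₁ : qA p * βA p α * qan ((qA p) ^ p ^ α) (p ^ (α + 1) + 1) * s₁ =
      qan ((qA p) ^ p ^ α) (p ^ (α + 1) + 1) - qan (uA p α) (p ^ (α + 1) + 1))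
    (𝒟 : Polynomial (PowerSeries ℤ_[p]) → Polynomial (PowerSeries ℤ_[p]))
    (h𝒟 : ∀ f, Polynomial.C (qan (uA p α) (p ^ (α + 1) + 1)) * 𝒟 f =
      ∑ j ∈ Finset.Icc 2 (p ^ (α + 1) + 1),
        Polynomial.C (aaA p α (p ^ (α + 1) + 1) j *
            (qA p) ^ (j * (j - 1) / 2 * p ^ (α + 1) - 1) * (βA p α) ^ (j - 2)) *
          Polynomial.X ^ (j - 1) * (nablaA p α)^[j - 1] f) :
    ∀ f : Polynomial (PowerSeries ℤ_[p]),
      nablaA p α (par f) + Polynomial.C (βA p α * qA p) * 𝒟 (nablaA p α (par f)) =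
        Polynomial.C s₀ * par (nablaA p α f) - 𝒟 (nablaA p α f) +
          Polynomial.C (s₀ * s₁) * nablaA p α f := by
  intro f
  have hk : qA p * βA p α * qan (uA p α) (p ^ (α + 1) + 1) ≠ 0 :=
    mul_ne_zero (mul_ne_zero (qA_ne_zero p) (βA_ne_zero p α))
      (qan_ne_zero (by simp [uA, constantCoeff_qA]) (by omega))
  refine mul_left_cancel₀ (Polynomial.C_ne_zero.2 hk) (Polynomial.ext fun r => ?_)
  have hpar_coeff : ∀ g n,
      qA p * βA p α * (par g).coeff n = substQ p α (g.coeff n) - g.coeff n := fun g n => by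
    simpa only [Polynomial.coeff_C_mul, Polynomial.coeff_sub, coeff_gamma0] using
      congrArg (Polynomial.coeff · n) (hpar g)
  have hx := hpar_coeff f (r + 1)
  have hy := hpar_coeff (nablaA p α f) r
  rw [coeff_nablaA, ← coe_substQHom, map_mul, coe_substQHom] at hy
  have hDpar := qan_mul_coeff_apply_nablaA p α h𝒟 (par f) r
  have hDf := qan_mul_coeff_apply_nablaA p α h𝒟 f r
  have hkey := qan_mul_nablaFactor_add_symbolD p α (r + 1)
  simp only [Polynomial.coeff_C_mul, Polynomial.coeff_add, Polynomial.coeff_sub, coeff_nablaA]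
  set x := f.coeff (r + 1)
  set E := nablaFactor p α (r + 1)
  set S := symbolD p α (r + 1)
  linear_combination
    (qan (uA p α) (p ^ (α + 1) + 1) * E + βA p α * qA p * S) * hx
    + qA p * βA p α * (βA p α * qA p) * hDpar + substQ p α x * hkey
    - qA p * βA p α * ((par (nablaA p α f)).coeff r + s₁ * x * E) * hs₀
    - qan (qA p ^ p ^ α) (p ^ (α + 1) + 1) * hy + qA p * βA p α * hDf - x * E * hs₁
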